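/- Let Φ be a flow on S^{d-1} commuting with the antipodal map, and let M be a chain recurrent component of the induced flow on ℝP^{d-1}. Suppose there exists v₀ ∈ S^{d-1} with p(v₀) ∈ M and -v₀ ∈ Ω(v₀) for the flow on the sphere. Then the set {v ∈ S^{d-1} : p(v) ∈ M} is chain transitive for the flow on the sphere. -/

import Mathlib

open Metric Finset

noncomputable section

abbrev Vec (d : ℕ) := EuclideanSpace ℝ (Fin d)

def ChainIn {X : Type*} [MetricSpace X] (Φ : ℝ → X → X) (S : Set X)
    (ε T : ℝ) (x y : X) : Prop :=
  ∃ (n : ℕ) (u : ℕ → X) (t : ℕ → ℝ), 1 ≤ n ∧ u 0 = x ∧ u n = y ∧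
    (∀ i ≤ n, u i ∈ S) ∧ (∀ i < n, T ≤ t i) ∧
    ∀ i < n, dist (Φ (t i) (u i)) (u (i + 1)) < ε

def OmegaIn {X : Type*} [MetricSpace X] (Φ : ℝ → X → X) (S : Set X) (x : X) : Set X :=
  {y | ∀ ε T : ℝ, 0 < ε → 0 < T → ChainIn Φ S ε T x y}

def ChainTransOn {X : Type*} [MetricSpace X] (Φ : ℝ → X → X) (S A : Set X) : Prop :=
  ∀ x ∈ A, ∀ y ∈ A, y ∈ OmegaIn Φ S x

structure IsFlow {X : Type*} [MetricSpace X] (Φ : ℝ → X → X) : Prop where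
  cont : Continuous fun q : ℝ × X => Φ q.1 q.2
  init : ∀ x, Φ 0 x = x
  comp : ∀ s t x, Φ (s + t) x = Φ s (Φ t x)

def sphere1 (d : ℕ) : Set (Vec d) := {v | ‖v‖ = 1}

structure IsLinearFlow (d : ℕ) (Φ : ℝ → Vec d → Vec d) : Prop where
  cont : Continuous fun q : ℝ × Vec d => Φ q.1 q.2
  lin : ∀ t, IsLinearMap ℝ (Φ t)
  init : ∀ x, Φ 0 x = x
  comp : ∀ s t x, Φ (s + t) x = Φ s (Φ t x)

def sphFlow {d : ℕ} (Φ : ℝ → Vec d → Vec d) : ℝ → Vec d → Vec d :=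
  fun t v => ‖Φ t v‖⁻¹ • Φ t v

abbrev PVec (d : ℕ) := WithLp 2 (Vec d × ℝ)

def emb {d : ℕ} (v : Vec d) (r : ℝ) : PVec d := (WithLp.equiv 2 (Vec d × ℝ)).symm (v, r)

def piP {d : ℕ} (v : Vec d) : PVec d := ‖emb v 1‖⁻¹ • emb v 1

def extFlow {d : ℕ} (Φ : ℝ → Vec d → Vec d) : ℝ → PVec d → PVec d :=
  fun t p => emb (Φ t ((WithLp.equiv 2 (Vec d × ℝ)) p).1) ((WithLp.equiv 2 (Vec d × ℝ)) p).2

def poinFlow {d : ℕ} (Φ : ℝ → Vec d → Vec d) : ℝ → PVec d → PVec d :=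
  fun t p => ‖extFlow Φ t p‖⁻¹ • extFlow Φ t p

def openHemi (d : ℕ) : Set (PVec d) :=
  {p | ‖p‖ = 1 ∧ 0 < ((WithLp.equiv 2 (Vec d × ℝ)) p).2}

def closedHemi (d : ℕ) : Set (PVec d) :=
  {p | ‖p‖ = 1 ∧ 0 ≤ ((WithLp.equiv 2 (Vec d × ℝ)) p).2}

def matFlow (d : ℕ) (A : Matrix (Fin d) (Fin d) ℝ) : ℝ → Vec d → Vec d :=
  fun t x => (EuclideanSpace.equiv (Fin d) ℝ).symm
    ((NormedSpace.exp (t • A)).mulVec (EuclideanSpace.equiv (Fin d) ℝ x))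

structure IsProjQuot {P : Type*} [MetricSpace P] (d : ℕ) (p : Vec d → P)
    (Φ : ℝ → Vec d → Vec d) (Ψ : ℝ → P → P) : Prop where
  surj : ∀ q : P, ∃ v ∈ sphere1 d, p v = q
  fib : ∀ v ∈ sphere1 d, ∀ w ∈ sphere1 d, (p v = p w ↔ v = w ∨ v = -w)
  dist_eq : ∀ v ∈ sphere1 d, ∀ w ∈ sphere1 d,
    dist (p v) (p w) = min (dist v w) (dist v (-w))
  conj : ∀ t : ℝ, ∀ v ∈ sphere1 d, Ψ t (p v) = p (Φ t v)

/-- A chain recurrent component: a maximal chain transitive set. -/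
def IsChainRecComp {X : Type*} [MetricSpace X] (Ψ : ℝ → X → X) (M : Set X) : Prop :=
  ChainTransOn Ψ Set.univ M ∧ ∀ S : Set X, ChainTransOn Ψ Set.univ S → M ⊆ S → S = M

/-!
Every ε-jump of a chain of `Ψ` lifts to an ε-jump on the sphere, because the distance of two
points of `ℝP^{d-1}` is the smaller of the distances between their lifts. Lifting a chain from
`p x` to `p y` that starts at `x` therefore gives a chain on the sphere from `x` to `y` or to `-y`.
Since `v₀` chains to `-v₀`, and hence by antipodal symmetry `-v₀` chains back to `v₀`, routing
every chain through `v₀` removes the sign ambiguity.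
-/

namespace ChainIn

variable {X : Type*} [MetricSpace X] {Φ : ℝ → X → X} {S : Set X} {ε T : ℝ}

lemma single {t : ℝ} {x y : X} (hx : x ∈ S) (hy : y ∈ S) (hT : T ≤ t)
    (hd : dist (Φ t x) y < ε) : ChainIn Φ S ε T x y :=
  ⟨1, fun i => if i = 0 then x else y, fun _ => t, le_rfl, rfl, rfl,
    fun i _ => by by_cases h : i = 0 <;> simp [h, hx, hy],
    fun _ _ => hT,
    fun i hi => by obtain rfl : i = 0 := (by omega); simpa using hd⟩

lemma trans {x y z : X} (h₁ : ChainIn Φ S ε T x y) (h₂ : ChainIn Φ S ε T y z) :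
    ChainIn Φ S ε T x z := by
  obtain ⟨n, u, t, hn, hu0, hun, huS, htT, hud⟩ := h₁
  obtain ⟨m, v, s, hm, hv0, hvm, hvS, hsT, hvd⟩ := h₂
  refine ⟨n + m, fun i => if i < n then u i else v (i - n),
    fun i => if i < n then t i else s (i - n), by omega, by simp [hu0, show 0 < n by omega],
    by simp [hvm], fun i hi => ?_, fun i hi => ?_, fun i hi => ?_⟩
  · dsimp only
    split_ifs with h
    · exact huS i h.le
    · exact hvS (i - n) (by omega)
  · dsimp only
    split_ifs with h
    · exact htT i h
    · exact hsT (i - n) (by omega)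
  · by_cases h : i < n
    · by_cases h' : i + 1 < n
      · simpa [h, h'] using hud i h
      · obtain rfl : i + 1 = n := by omega
        simpa [h, hv0, ← hun] using hud i h
    · have hidx : i + 1 - n = i - n + 1 := by omega
      simpa [h, show ¬ i + 1 < n by omega, hidx] using hvd (i - n) (by omega)

lemma map {Y : Type*} [MetricSpace Y] {Ψ : ℝ → Y → Y} {S' : Set Y} {f : X → Y}
    (hf : LipschitzWith 1 f) (hS : Set.MapsTo f S S') (hconj : ∀ t x, Ψ t (f x) = f (Φ t x))
    {x y : X} (h : ChainIn Φ S ε T x y) : ChainIn Ψ S' ε T (f x) (f y) := by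
  obtain ⟨n, u, t, hn, hu0, hun, huS, htT, hud⟩ := h
  refine ⟨n, f ∘ u, t, hn, by simp [hu0], by simp [hun], fun i hi => hS (huS i hi), htT,
    fun i hi => ?_⟩
  calc dist (Ψ (t i) (f (u i))) (f (u (i + 1)))
      = dist (f (Φ (t i) (u i))) (f (u (i + 1))) := by rw [hconj]
    _ ≤ dist (Φ (t i) (u i)) (u (i + 1)) := by simpa using hf.dist_le_mul _ _
    _ < ε := hud i hi

end ChainIn

lemma neg_mem_sphere1 {d : ℕ} {v : Vec d} (hv : v ∈ sphere1 d) : -v ∈ sphere1 d := by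
  simpa [sphere1] using hv

lemma ChainIn.neg {d : ℕ} {Φ : ℝ → Vec d → Vec d}
    (hneg : ∀ (t : ℝ) (x : Vec d), Φ t (-x) = -Φ t x)
    {ε T : ℝ} {x y : Vec d} (h : ChainIn Φ (sphere1 d) ε T x y) :
    ChainIn Φ (sphere1 d) ε T (-x) (-y) :=
  h.map (isometry_neg (G := Vec d)).lipschitz (fun _ => neg_mem_sphere1) hneg

namespace IsProjQuot

variable {d : ℕ} {P : Type*} [MetricSpace P] {p : Vec d → P} {Φ : ℝ → Vec d → Vec d}
  {Ψ : ℝ → P → P}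

lemma exists_lift_step (hq : IsProjQuot d p Φ Ψ)
    (hsph : ∀ t : ℝ, ∀ v ∈ sphere1 d, Φ t v ∈ sphere1 d)
    {ε t : ℝ} {x : Vec d} {q : P} (hx : x ∈ sphere1 d) (hd : dist (Ψ t (p x)) q < ε) :
    ∃ w ∈ sphere1 d, p w = q ∧ dist (Φ t x) w < ε := by
  obtain ⟨w, hw, rfl⟩ := hq.surj q
  rw [hq.conj t x hx, hq.dist_eq _ (hsph t x hx) _ hw] at hd
  rcases min_lt_iff.mp hd with h | h
  · exact ⟨w, hw, rfl, h⟩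
  · exact ⟨-w, neg_mem_sphere1 hw, (hq.fib _ (neg_mem_sphere1 hw) w hw).mpr (Or.inr rfl), h⟩

lemma exists_lift_chainIn (hq : IsProjQuot d p Φ Ψ)
    (hsph : ∀ t : ℝ, ∀ v ∈ sphere1 d, Φ t v ∈ sphere1 d)
    {S : Set P} {ε T : ℝ} {x : Vec d} {q : P} (hx : x ∈ sphere1 d)
    (h : ChainIn Ψ S ε T (p x) q) :
    ∃ w ∈ sphere1 d, p w = q ∧ ChainIn Φ (sphere1 d) ε T x w := by
  obtain ⟨n, u, t, hn, hu0, rfl, -, htT, hud⟩ := h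
  have hprefix : ∀ k, 1 ≤ k → k ≤ n →
      ∃ w ∈ sphere1 d, p w = u k ∧ ChainIn Φ (sphere1 d) ε T x w := by
    intro k hk
    induction k, hk using Nat.le_induction with
    | base =>
      intro hn
      obtain ⟨w, hw, hpw, hdw⟩ := hq.exists_lift_step hsph hx (hu0 ▸ hud 0 (by omega))
      exact ⟨w, hw, hpw, .single hx hw (htT 0 (by omega)) hdw⟩
    | succ k _ ih =>
      intro hk
      obtain ⟨w, hw, hpw, hxw⟩ := ih (by omega)
      obtain ⟨w', hw', hpw', hdw'⟩ := hq.exists_lift_step hsph hw (hpw ▸ hud k (by omega))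
      exact ⟨w', hw', hpw', hxw.trans (.single hw hw' (htT k (by omega)) hdw')⟩
  exact hprefix n hn le_rfl

lemma chainIn_or_chainIn_neg (hq : IsProjQuot d p Φ Ψ)
    (hsph : ∀ t : ℝ, ∀ v ∈ sphere1 d, Φ t v ∈ sphere1 d)
    {S : Set P} {ε T : ℝ} {x y : Vec d} (hx : x ∈ sphere1 d) (hy : y ∈ sphere1 d)
    (h : ChainIn Ψ S ε T (p x) (p y)) :
    ChainIn Φ (sphere1 d) ε T x y ∨ ChainIn Φ (sphere1 d) ε T x (-y) := by
  obtain ⟨w, hw, hpw, hxw⟩ := hq.exists_lift_chainIn hsph hx h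
  rcases (hq.fib w hw y hy).mp hpw with rfl | rfl
  · exact .inl hxw
  · exact .inr hxw

end IsProjQuot

theorem stmt3_general {d : ℕ} {P : Type*} [MetricSpace P] (p : Vec d → P)
    (Φ : ℝ → Vec d → Vec d) (Ψ : ℝ → P → P)
    (hsph : ∀ t : ℝ, ∀ v ∈ sphere1 d, Φ t v ∈ sphere1 d)
    (hneg : ∀ (t : ℝ) (x : Vec d), Φ t (-x) = -Φ t x)
    (hq : IsProjQuot d p Φ Ψ)
    (M : Set P) (hM : IsChainRecComp Ψ M)
    (v₀ : Vec d) (hv₀ : v₀ ∈ sphere1 d) (hpv₀ : p v₀ ∈ M)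
    (hrec : -v₀ ∈ OmegaIn Φ (sphere1 d) v₀) :
    ChainTransOn Φ (sphere1 d) {v | v ∈ sphere1 d ∧ p v ∈ M} := by
  rintro x ⟨hx, hpx⟩ y ⟨hy, hpy⟩ ε T hε hT
  have hto : ChainIn Φ (sphere1 d) ε T v₀ (-v₀) := hrec ε T hε hT
  have hback : ChainIn Φ (sphere1 d) ε T (-v₀) v₀ := by simpa using hto.neg hneg
  have hxv : ChainIn Φ (sphere1 d) ε T x v₀ := by
    rcases hq.chainIn_or_chainIn_neg hsph hx hv₀ (hM.1 _ hpx _ hpv₀ ε T hε hT) with h | h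
    · exact h
    · exact h.trans hback
  have hvy : ChainIn Φ (sphere1 d) ε T v₀ y := by
    rcases hq.chainIn_or_chainIn_neg hsph hv₀ hy (hM.1 _ hpv₀ _ hpy ε T hε hT) with h | h
    · exact h
    · exact hto.trans (by simpa using h.neg hneg)
  exact hxv.trans hvy

theorem stmt3 {d : ℕ} {P : Type*} [MetricSpace P] (p : Vec d → P)
    (Φ : ℝ → Vec d → Vec d) (Ψ : ℝ → P → P)
    (hΦ : IsFlow Φ) (hΨ : IsFlow Ψ)
    (hsph : ∀ t : ℝ, ∀ v ∈ sphere1 d, Φ t v ∈ sphere1 d)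
    (hneg : ∀ (t : ℝ) (x : Vec d), Φ t (-x) = -Φ t x)
    (hq : IsProjQuot d p Φ Ψ)
    (M : Set P) (hM : IsChainRecComp Ψ M)
    (v₀ : Vec d) (hv₀ : v₀ ∈ sphere1 d) (hpv₀ : p v₀ ∈ M)
    (hrec : -v₀ ∈ OmegaIn Φ (sphere1 d) v₀) :
    ChainTransOn Φ (sphere1 d) {v | v ∈ sphere1 d ∧ p v ∈ M} :=
  stmt3_general p Φ Ψ hsph hneg hq M hM v₀ hv₀ hpv₀ hrec
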